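/- Let n ≥ 1, s ∈ (0,1), a := 1−2s, p ∈ [1,∞), R > 0, and let u ∈ L^p(B_{2R}) ∩ L¹_s(ℝⁿ). Let v be the s-harmonic extension of u. Then (∫_{𝔅_R⁺} y^a |v(x)|^p dx)^{1/p} ≤ C_R ( ‖u‖_{L^p(B_{2R})} + ‖u‖_{L¹_s(ℝⁿ)} ) for some constant C_R depending only on n, s, p, and R. -/

import Mathlib

open MeasureTheory Real Filter Metric Set Topology
open scoped NNReal RealInnerProductSpace

noncomputable section

abbrev Eu (n : ℕ) : Type := EuclideanSpace ℝ (Fin n)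

/-- The first `n` coordinates of a point of `ℝ^{n+1}`. -/
def headE {n : ℕ} (x : Eu (n+1)) : Eu n := WithLp.toLp 2 (fun i : Fin n => x i.castSucc)

/-- The last coordinate of a point of `ℝ^{n+1}` (the "vertical" variable `y`). -/
def lastE {n : ℕ} (x : Eu (n+1)) : ℝ := x (Fin.last n)

/-- The point `(x', y) ∈ ℝ^{n+1}`. -/
def snocE {n : ℕ} (x' : Eu n) (y : ℝ) : Eu (n+1) :=
  WithLp.toLp 2 (Fin.snoc (α := fun _ => ℝ) (WithLp.ofLp x') y)

/-- The open upper half-space `ℝ^{n+1}_+`. -/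
def upperHS (n : ℕ) : Set (Eu (n+1)) := {x | 0 < lastE x}

/-- The open upper half-ball `𝔅_R⁺` of radius `R` centered at the origin. -/
def HB (n : ℕ) (R : ℝ) : Set (Eu (n+1)) := Metric.ball (0 : Eu (n+1)) R ∩ upperHS n

/-- The norm `‖u‖_{L¹_s(ℝⁿ)}`. -/
def L1sNorm (n : ℕ) (s : ℝ) (u : Eu n → ℝ) : ℝ :=
  ∫ x' : Eu n, |u x'| * (1 + ‖x'‖ ^ 2) ^ (-(((n : ℝ) + 2 * s) / 2))

/-- Membership in `L¹_s(ℝⁿ)`. -/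
def MemL1s (n : ℕ) (s : ℝ) (u : Eu n → ℝ) : Prop :=
  Integrable (fun x' : Eu n => u x' * (1 + ‖x'‖ ^ 2) ^ (-(((n : ℝ) + 2 * s) / 2)))

/-- The Poisson kernel `P_s(x̄', y) = p_{n,s} y^{2s} (|x̄'|² + y²)^{-(n+2s)/2}`. -/
def Pgen (n : ℕ) (s pns : ℝ) (xb : Eu n) (y : ℝ) : ℝ :=
  pns * y ^ (2 * s) * (‖xb‖ ^ 2 + y ^ 2) ^ (-(((n : ℝ) + 2 * s) / 2))

/-- `pns` is the normalizing constant of the Poisson kernel. -/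
def IsPoissonConst (n : ℕ) (s pns : ℝ) : Prop :=
  0 < pns ∧ ∀ y : ℝ, 0 < y → ∫ xb : Eu n, Pgen n s pns xb y = 1

/-- The `s`-harmonic extension of `u` to the upper half-space. -/
def sExt (n : ℕ) (s pns : ℝ) (u : Eu n → ℝ) (x : Eu (n+1)) : ℝ :=
  ∫ z' : Eu n, u z' * Pgen n s pns (headE x - z') (lastE x)

/-- Partial derivative in the `i`-th coordinate direction. -/
def pder {m : ℕ} (i : Fin m) (g : Eu m → ℝ) (x : Eu m) : ℝ :=
  fderiv ℝ g x (EuclideanSpace.single i 1)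

/-- Squared Frobenius norm of the Hessian. -/
def hessFrobSq {m : ℕ} (v : Eu m → ℝ) (x : Eu m) : ℝ :=
  ∑ i : Fin m, ∑ j : Fin m, (pder i (pder j v) x) ^ 2

/-- Radial derivative with respect to the origin, `v_r(x) = (x/|x|)·∇v(x)`. -/
def radialDer {m : ℕ} (v : Eu m → ℝ) (x : Eu m) : ℝ :=
  ⟪‖x‖⁻¹ • x, gradient v x⟫

/-- A Lipschitz test function on `ℝⁿ × [0,∞)` whose support is a compact subset
of `Ω × [0,∞)` (values on `{y < 0}` are irrelevant). -/
def AdmissibleTest (n : ℕ) (Ω : Set (Eu n)) (ξ : Eu (n+1) → ℝ) : Prop :=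
  (∃ K : ℝ≥0, LipschitzWith K ξ) ∧
    ∃ Kc : Set (Eu (n+1)), IsCompact Kc ∧ (Kc ⊆ {x | headE x ∈ Ω ∧ 0 ≤ lastE x}) ∧
      ∀ x : Eu (n+1), 0 ≤ lastE x → ξ x ≠ 0 → x ∈ Kc

/-- Stability of `u` in `Ω` for the half-Laplacian, written via the harmonic extension. -/
def IsStable (n : ℕ) (Ω : Set (Eu n)) (f : ℝ → ℝ) (u : Eu n → ℝ) : Prop :=
  ∀ ξ : Eu (n+1) → ℝ, AdmissibleTest n Ω ξ →
    ∫ x' in Ω, deriv f (u x') * (ξ (snocE x' 0)) ^ 2 ≤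
      ∫ x in upperHS n, ‖gradient ξ x‖ ^ 2

/-- Weighted stability of `u` in `Ω` (fractional power `s`, trace constant `d`). -/
def IsStableW (n : ℕ) (s d : ℝ) (Ω : Set (Eu n)) (f : ℝ → ℝ) (u : Eu n → ℝ) : Prop :=
  ∀ ξ : Eu (n+1) → ℝ, AdmissibleTest n Ω ξ →
    ∫ x' in Ω, deriv f (u x') * (ξ (snocE x' 0)) ^ 2 ≤
      d * ∫ x in upperHS n, (lastE x) ^ (1 - 2 * s) * ‖gradient ξ x‖ ^ 2

/-- `u` solves `(−Δ)^{1/2} u = f(u)` in `Ω` in the extension sense: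
`lim_{y↓0} −∂_y v(x',y) = f(u(x'))` for all `x' ∈ Ω`, where `v` is the harmonic extension. -/
def SolvesHalfLap (n : ℕ) (Ω : Set (Eu n)) (f : ℝ → ℝ) (u : Eu n → ℝ)
    (v : Eu (n+1) → ℝ) : Prop :=
  ∀ x' ∈ Ω, Tendsto (fun y : ℝ => -(deriv (fun t : ℝ => v (snocE x' t)) y))
    (𝓝[>] (0 : ℝ)) (𝓝 (f (u x')))

/-- `u` solves `(−Δ)^s u = f(u)` in `Ω` in the extension sense:
`−d lim_{y↓0} y^{1−2s} ∂_y v(x',y) = f(u(x'))` for all `x' ∈ Ω`. -/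
def SolvesGen (n : ℕ) (s d : ℝ) (Ω : Set (Eu n)) (f : ℝ → ℝ) (u : Eu n → ℝ)
    (v : Eu (n+1) → ℝ) : Prop :=
  ∀ x' ∈ Ω, Tendsto (fun y : ℝ => -(d * (y ^ (1 - 2 * s) * deriv (fun t : ℝ => v (snocE x' t)) y)))
    (𝓝[>] (0 : ℝ)) (𝓝 (f (u x')))

/-- `f` is of class `C^{1,γ}` (locally Hölder continuous first derivative). -/
def C1Holder (γ : ℝ) (f : ℝ → ℝ) : Prop :=
  ContDiff ℝ 1 f ∧ ∀ K : Set ℝ, IsCompact K →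
    ∃ C : ℝ≥0, HolderOnWith C γ.toNNReal (deriv f) K

/-- `Ω` has `C¹` boundary. -/
def HasC1Boundary {n : ℕ} (Ω : Set (Eu n)) : Prop :=
  ∀ x ∈ frontier Ω, ∃ g : Eu n → ℝ, ContDiffAt ℝ 1 g x ∧ fderiv ℝ g x ≠ 0 ∧
    ∀ᶠ z in 𝓝 x, (z ∈ Ω ↔ g z < 0)

open scoped ENNReal

/-!
Split `u` into its restriction to `B_{2R}` and the rest. For `|x'| < R`, `0 < y < R` and
`|z'| ≥ 2R` the kernel `P_s(x' - z', y)` is bounded by a constant times the `L¹_s` weight of `z'`,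
so the far part of `v` is bounded by `C ‖u‖_{L¹_s}`. The near part is the convolution of
`u 1_{B_{2R}}` with the probability density `P_s(·, y)`, so by Jensen's inequality and Tonelli its
`L^p(B_R)` norm is at most `‖u‖_{L^p(B_{2R})}`, uniformly in `y`. Integrating in `y` against
`y^{1-2s}`, which is integrable on `(0, R)` because `s < 1`, gives the bound.
-/

namespace ENNReal

variable {α : Type*} [MeasurableSpace α] {μ : Measure α}

theorem rpow_lintegral_mul_le_lintegral_rpow_mul {p : ℝ} (hp : 1 ≤ p) {f g : α → ℝ≥0∞}
    (hf : AEMeasurable f μ) (hg : AEMeasurable g μ) (hg1 : ∫⁻ a, g a ∂μ ≤ 1) :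
    (∫⁻ a, f a * g a ∂μ) ^ p ≤ ∫⁻ a, f a ^ p * g a ∂μ := by
  have hp0 : 0 < p := zero_lt_one.trans_le hp
  have hsplit : ∀ a, f a * g a = (f a ^ p * g a) ^ p⁻¹ * g a ^ (1 - p⁻¹) := fun a => by
    rw [mul_rpow_of_nonneg _ _ (inv_nonneg.2 hp0.le), ← rpow_mul, mul_inv_cancel₀ hp0.ne',
      rpow_one, mul_assoc, ← rpow_add_of_nonneg _ _ (inv_nonneg.2 hp0.le)
        (sub_nonneg.2 (inv_le_one_of_one_le₀ hp)), add_sub_cancel, rpow_one]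
  have holder := lintegral_mul_norm_pow_le (f := fun a => f a ^ p * g a)
    ((hf.pow_const p).mul hg) hg (inv_nonneg.2 hp0.le) (sub_nonneg.2 (inv_le_one_of_one_le₀ hp))
    (add_sub_cancel _ _)
  rw [← lintegral_congr hsplit] at holder
  calc (∫⁻ a, f a * g a ∂μ) ^ p
      ≤ ((∫⁻ a, f a ^ p * g a ∂μ) ^ p⁻¹ * (∫⁻ a, g a ∂μ) ^ (1 - p⁻¹)) ^ p :=
        rpow_le_rpow holder hp0.le
    _ ≤ ((∫⁻ a, f a ^ p * g a ∂μ) ^ p⁻¹ * 1) ^ p := by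
        gcongr
        exact rpow_le_one hg1 (sub_nonneg.2 (inv_le_one_of_one_le₀ hp))
    _ = ∫⁻ a, f a ^ p * g a ∂μ := by
        rw [mul_one, ← rpow_mul, inv_mul_cancel₀ hp0.ne', rpow_one]

end ENNReal

section Convolution

variable {G : Type*} [MeasurableSpace G] [AddCommGroup G] [MeasurableAdd₂ G] [MeasurableNeg G]
  {μ : Measure G} [SFinite μ] [μ.IsAddLeftInvariant] [μ.IsNegInvariant]

theorem lintegral_rpow_setLIntegral_mul_sub_le {p : ℝ} (hp : 1 ≤ p) {f k : G → ℝ≥0∞}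
    (hf : Measurable f) (hk : Measurable k) (hk1 : ∫⁻ x, k x ∂μ ≤ 1) (S : Set G) :
    ∫⁻ x, (∫⁻ z in S, f z * k (x - z) ∂μ) ^ p ∂μ ≤ ∫⁻ z in S, f z ^ p ∂μ := by
  have hmass : ∀ x, ∫⁻ z in S, k (x - z) ∂μ ≤ 1 := fun x =>
    (setLIntegral_le_lintegral _ _).trans ((lintegral_sub_left_eq_self k x).trans_le hk1)
  calc ∫⁻ x, (∫⁻ z in S, f z * k (x - z) ∂μ) ^ p ∂μ
      ≤ ∫⁻ x, ∫⁻ z in S, f z ^ p * k (x - z) ∂μ ∂μ := lintegral_mono fun x =>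
        ENNReal.rpow_lintegral_mul_le_lintegral_rpow_mul hp hf.aemeasurable
          (hk.comp (measurable_const.sub measurable_id)).aemeasurable (hmass x)
    _ = ∫⁻ z in S, ∫⁻ x, f z ^ p * k (x - z) ∂μ ∂μ :=
        lintegral_lintegral_swap ((hf.comp measurable_snd).pow_const p |>.mul
          (hk.comp (measurable_fst.sub measurable_snd))).aemeasurable
    _ ≤ ∫⁻ z in S, f z ^ p ∂μ := lintegral_mono fun z => by
        rw [lintegral_const_mul (f := fun x => k (x - z)) _ (hk.comp (measurable_sub_const z)),
          lintegral_sub_right_eq_self k z]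
        exact mul_le_of_le_one_right' hk1

end Convolution

theorem setLIntegral_Ioo_ofReal_rpow_ne_top {r : ℝ} (hr : -1 < r) (R : ℝ) :
    ∫⁻ y in Ioo 0 R, ENNReal.ofReal (y ^ r) ≠ ∞ :=
  (((intervalIntegral.intervalIntegrable_rpow' hr).def'.mono_set
    (Ioo_subset_Ioc_self.trans Ioc_subset_uIoc)).lintegral_lt_top).ne

theorem setLIntegral_enorm_rpow_eq_ofReal {α : Type*} [MeasurableSpace α] {μ : Measure α}
    {f : α → ℝ} {p : ℝ} (hp : 0 ≤ p) {S : Set α} (hf : IntegrableOn (fun a => |f a| ^ p) S μ) :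
    ∫⁻ a in S, ‖f a‖ₑ ^ p ∂μ = ENNReal.ofReal (∫ a in S, |f a| ^ p ∂μ) := by
  rw [ofReal_integral_eq_lintegral_ofReal hf (ae_of_all _ fun a => by positivity)]
  refine lintegral_congr fun a => ?_
  rw [Real.enorm_eq_ofReal_abs, ENNReal.ofReal_rpow_of_nonneg (abs_nonneg _) hp]

theorem integral_rpow_one_div_le_of_lintegral_le {α : Type*} [MeasurableSpace α] {μ : Measure α}
    {f : α → ℝ} (hf : 0 ≤ᵐ[μ] f) {p S : ℝ} (hp : 0 < p) (hS : 0 ≤ S) {D : ℝ≥0∞} (hD : D ≠ ∞)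
    (h : ∫⁻ a, ENNReal.ofReal (f a) ∂μ ≤ D * ENNReal.ofReal (S ^ p)) :
    (∫ a, f a ∂μ) ^ (1 / p) ≤ D.toReal ^ (1 / p) * S := by
  have hint : ∫ a, f a ∂μ ≤ D.toReal * S ^ p :=
    calc ∫ a, f a ∂μ ≤ (∫⁻ a, ENNReal.ofReal ‖f a‖ ∂μ).toReal :=
          (le_abs_self _).trans (norm_integral_le_lintegral_norm f)
      _ = (∫⁻ a, ENNReal.ofReal (f a) ∂μ).toReal := by
          congr 1
          exact lintegral_congr_ae
            (hf.mono fun a ha => congrArg ENNReal.ofReal (Real.norm_of_nonneg ha))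
      _ ≤ (D * ENNReal.ofReal (S ^ p)).toReal :=
          ENNReal.toReal_mono (ENNReal.mul_ne_top hD ENNReal.ofReal_ne_top) h
      _ = D.toReal * S ^ p := by
          rw [ENNReal.toReal_mul, ENNReal.toReal_ofReal (by positivity)]
  calc (∫ a, f a ∂μ) ^ (1 / p) ≤ (D.toReal * S ^ p) ^ (1 / p) :=
        Real.rpow_le_rpow (integral_nonneg_of_ae hf) hint (by positivity)
    _ = D.toReal ^ (1 / p) * S := by
        rw [Real.mul_rpow ENNReal.toReal_nonneg (by positivity), ← Real.rpow_mul hS,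
          mul_one_div_cancel hp.ne', Real.rpow_one]

theorem ENNReal.ofReal_add_mul_rpow_le {p a b : ℝ} (hp : 0 < p) (ha : 0 ≤ a) (hb : 0 ≤ b)
    (c V : ℝ≥0∞) :
    ENNReal.ofReal a + (c * ENNReal.ofReal b) ^ p * V ≤
      (1 + c ^ p * V) * ENNReal.ofReal ((a ^ (1 / p) + b) ^ p) := by
  have ha' : 0 ≤ a ^ (1 / p) := by positivity
  set M := ENNReal.ofReal ((a ^ (1 / p) + b) ^ p)
  have haM : ENNReal.ofReal a ≤ M := by
    refine ENNReal.ofReal_le_ofReal ?_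
    calc a = (a ^ (1 / p)) ^ p := by
          rw [← Real.rpow_mul ha, one_div_mul_cancel hp.ne', Real.rpow_one]
      _ ≤ (a ^ (1 / p) + b) ^ p := by gcongr; linarith
  have hbM : ENNReal.ofReal b ^ p ≤ M := by
    rw [ENNReal.ofReal_rpow_of_nonneg hb hp.le]
    exact ENNReal.ofReal_le_ofReal (by gcongr; linarith)
  calc ENNReal.ofReal a + (c * ENNReal.ofReal b) ^ p * V ≤ M + c ^ p * M * V := by
        rw [ENNReal.mul_rpow_of_nonneg _ _ hp.le]
        exact add_le_add haM (by gcongr)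
    _ = (1 + c ^ p * V) * M := by ring

section Coordinates

variable {n : ℕ}

def lastHeadEquiv (n : ℕ) : Eu (n+1) ≃ᵐ ℝ × Eu n :=
  (MeasurableEquiv.toLp 2 (Fin (n+1) → ℝ)).symm.trans
    ((MeasurableEquiv.piFinSuccAbove (fun _ : Fin (n+1) => ℝ) (Fin.last n)).trans
      ((MeasurableEquiv.refl ℝ).prodCongr (MeasurableEquiv.toLp 2 (Fin n → ℝ))))

theorem lastHeadEquiv_apply (x : Eu (n+1)) : lastHeadEquiv n x = (lastE x, headE x) := by
  refine Prod.ext rfl ?_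
  ext j
  show x ((Fin.last n).succAbove j) = x j.castSucc
  rw [Fin.succAbove_last]

theorem measurePreserving_lastHeadEquiv :
    MeasurePreserving (lastHeadEquiv n) volume volume := by
  have hsplit : MeasurePreserving
      ((MeasurableEquiv.refl ℝ).prodCongr (MeasurableEquiv.toLp 2 (Fin n → ℝ)))
      volume volume := by
    rw [Measure.volume_eq_prod (α := ℝ) (β := Eu n), Measure.volume_eq_prod (α := ℝ)]
    exact (MeasurePreserving.id _).prod
      (EuclideanSpace.volume_preserving_symm_measurableEquiv_toLp (Fin n)).symm
  exact (hsplit.comp (volume_preserving_piFinSuccAbove _ (Fin.last n))).comp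
    (EuclideanSpace.volume_preserving_symm_measurableEquiv_toLp (Fin (n+1)))

theorem norm_headE_le (x : Eu (n+1)) : ‖headE x‖ ≤ ‖x‖ := by
  rw [EuclideanSpace.norm_eq, EuclideanSpace.norm_eq, Fin.sum_univ_castSucc]
  exact Real.sqrt_le_sqrt (le_add_of_nonneg_right (by positivity))

theorem abs_lastE_le (x : Eu (n+1)) : |lastE x| ≤ ‖x‖ := by
  simpa [lastE] using PiLp.norm_apply_le x (Fin.last n)

theorem HB_subset_preimage_lastHeadEquiv (R : ℝ) :
    HB n R ⊆ lastHeadEquiv n ⁻¹' (Ioo 0 R ×ˢ ball 0 R) := by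
  rintro x ⟨hx, hy⟩
  rw [mem_ball_zero_iff] at hx
  rw [mem_preimage, lastHeadEquiv_apply]
  exact ⟨⟨hy, (le_abs_self _).trans_lt ((abs_lastE_le x).trans_lt hx)⟩,
    mem_ball_zero_iff.2 ((norm_headE_le x).trans_lt hx)⟩

theorem measurableSet_HB (R : ℝ) : MeasurableSet (HB n R) :=
  measurableSet_ball.inter (measurableSet_lt measurable_const (by unfold lastE; fun_prop))

theorem setLIntegral_HB_le (R : ℝ) (H : ℝ × Eu n → ℝ≥0∞) :
    ∫⁻ x in HB n R, H (lastE x, headE x) ≤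
      ∫⁻ y in Ioo 0 R, ∫⁻ x' in ball 0 R, H (y, x') := by
  calc ∫⁻ x in HB n R, H (lastE x, headE x)
      ≤ ∫⁻ x in lastHeadEquiv n ⁻¹' (Ioo 0 R ×ˢ ball 0 R), H (lastHeadEquiv n x) := by
        simp only [lastHeadEquiv_apply]
        exact lintegral_mono_set (HB_subset_preimage_lastHeadEquiv R)
    _ = ∫⁻ w in Ioo 0 R ×ˢ ball 0 R, H w :=
        measurePreserving_lastHeadEquiv.setLIntegral_comp_preimage_emb
          (lastHeadEquiv n).measurableEmbedding H _
    _ ≤ ∫⁻ y in Ioo 0 R, ∫⁻ x' in ball 0 R, H (y, x') := by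
        rw [Measure.volume_eq_prod, ← Measure.prod_restrict]
        exact lintegral_prod_le H

end Coordinates

section PoissonKernel

variable {n : ℕ} {s pns : ℝ}

def l1sWeight (n : ℕ) (s : ℝ) (x' : Eu n) : ℝ :=
  (1 + ‖x'‖ ^ 2) ^ (-(((n : ℝ) + 2 * s) / 2))

theorem l1sWeight_nonneg (x' : Eu n) : 0 ≤ l1sWeight n s x' := by
  unfold l1sWeight; positivity

theorem Pgen_nonneg (hpns : 0 ≤ pns) (xb : Eu n) {y : ℝ} (hy : 0 ≤ y) :
    0 ≤ Pgen n s pns xb y := by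
  unfold Pgen; positivity

theorem measurable_Pgen : Measurable fun w : Eu n × ℝ => Pgen n s pns w.1 w.2 := by
  unfold Pgen; fun_prop

theorem IsPoissonConst.lintegral_ofReal_Pgen (h : IsPoissonConst n s pns) {y : ℝ} (hy : 0 < y) :
    ∫⁻ xb : Eu n, ENNReal.ofReal (Pgen n s pns xb y) = 1 := by
  have hint : Integrable fun xb : Eu n => Pgen n s pns xb y :=
    Integrable.of_integral_ne_zero (by rw [h.2 y hy]; exact one_ne_zero)
  rw [← ofReal_integral_eq_lintegral_ofReal hint
    (ae_of_all _ fun xb => Pgen_nonneg h.1.le xb hy.le), h.2 y hy, ENNReal.ofReal_one]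

/-- On the unit ball `P_s(·, 1) ≥ p_{n,s} 2^{-(n+2s)/2}`, and `P_s(·, 1)` has mass `1`. -/
theorem IsPoissonConst.le_div_volume (h : IsPoissonConst n s pns) (hs : 0 ≤ s) :
    pns ≤ 2 ^ (((n : ℝ) + 2 * s) / 2) / volume.real (ball (0 : Eu n) 1) := by
  have he : 0 ≤ ((n : ℝ) + 2 * s) / 2 := by positivity
  have hV : 0 < volume.real (ball (0 : Eu n) 1) :=
    ENNReal.toReal_pos (measure_ball_pos _ _ one_pos).ne' measure_ball_lt_top.ne
  have hlow : ∀ xb ∈ ball (0 : Eu n) 1,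
      pns * 2 ^ (-(((n : ℝ) + 2 * s) / 2)) ≤ Pgen n s pns xb 1 := by
    intro xb hxb
    rw [mem_ball_zero_iff] at hxb
    rw [Pgen, Real.one_rpow, mul_one, one_pow]
    exact mul_le_mul_of_nonneg_left (Real.rpow_le_rpow_of_nonpos (by positivity)
      (by nlinarith [norm_nonneg xb]) (neg_nonpos.2 he)) h.1.le
  have hint : Integrable fun xb : Eu n => Pgen n s pns xb 1 :=
    Integrable.of_integral_ne_zero (by rw [h.2 1 one_pos]; exact one_ne_zero)
  have hmass : pns * 2 ^ (-(((n : ℝ) + 2 * s) / 2)) * volume.real (ball (0 : Eu n) 1) ≤ 1 :=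
    calc _ ≤ ∫ xb in ball (0 : Eu n) 1, Pgen n s pns xb 1 :=
          setIntegral_ge_of_const_le_real measurableSet_ball measure_ball_lt_top.ne hlow
            hint.integrableOn
      _ ≤ ∫ xb, Pgen n s pns xb 1 :=
          setIntegral_le_integral hint (ae_of_all _ fun xb => Pgen_nonneg h.1.le xb zero_le_one)
      _ = 1 := h.2 1 one_pos
  rwa [Real.rpow_neg zero_le_two, ← div_eq_mul_inv, div_mul_eq_mul_div,
    div_le_one (by positivity), ← le_div_iff₀ hV] at hmass

/-- If `|x'| < R ≤ |z'|/2` and `0 ≤ y ≤ R`, then `|x' - z'|² + y² ≥ c (1 + |z'|²)` with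
`c = min (1/8) (R²/2)`; the factor `2^{(n+2s)/2} / |B₁|` bounds `p_{n,s}`. -/
def poissonTailConst (n : ℕ) (s R : ℝ) : ℝ :=
  2 ^ (((n : ℝ) + 2 * s) / 2) / volume.real (ball (0 : Eu n) 1) * R ^ (2 * s) *
    min (1 / 8) (R ^ 2 / 2) ^ (-(((n : ℝ) + 2 * s) / 2))

theorem IsPoissonConst.Pgen_sub_le (h : IsPoissonConst n s pns) (hs : 0 ≤ s) {R : ℝ}
    (hR : 0 < R) {x' z' : Eu n} {y : ℝ} (hx' : ‖x'‖ < R) (hy : 0 ≤ y) (hyR : y ≤ R)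
    (hz' : 2 * R ≤ ‖z'‖) :
    Pgen n s pns (x' - z') y ≤ poissonTailConst n s R * l1sWeight n s z' := by
  set c := min (1 / 8 : ℝ) (R ^ 2 / 2)
  have hc : 0 < c := lt_min (by norm_num) (by positivity)
  have hdist : c * (1 + ‖z'‖ ^ 2) ≤ ‖x' - z'‖ ^ 2 + y ^ 2 := by
    have hhalf : ‖z'‖ / 2 ≤ ‖x' - z'‖ := by
      have := norm_sub_norm_le z' x'
      rw [norm_sub_rev] at this
      linarith
    have hc8 : c ≤ 1 / 8 := min_le_left _ _
    have hcR : c ≤ R ^ 2 / 2 := min_le_right _ _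
    nlinarith [pow_le_pow_left₀ (by positivity) hhalf 2, sq_nonneg y, sq_nonneg ‖z'‖,
      mul_le_mul_of_nonneg_right hc8 (sq_nonneg ‖z'‖)]
  have he : 0 ≤ ((n : ℝ) + 2 * s) / 2 := by positivity
  calc Pgen n s pns (x' - z') y
      = pns * y ^ (2 * s) * (‖x' - z'‖ ^ 2 + y ^ 2) ^ (-(((n : ℝ) + 2 * s) / 2)) := rfl
    _ ≤ 2 ^ (((n : ℝ) + 2 * s) / 2) / volume.real (ball (0 : Eu n) 1) * R ^ (2 * s) *
          (c * (1 + ‖z'‖ ^ 2)) ^ (-(((n : ℝ) + 2 * s) / 2)) := by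
        gcongr ?_ * ?_
        · gcongr
          exact h.le_div_volume hs
        · exact Real.rpow_le_rpow_of_nonpos (by positivity) hdist (neg_nonpos.2 he)
    _ = poissonTailConst n s R * l1sWeight n s z' := by
        rw [Real.mul_rpow hc.le (by positivity), poissonTailConst, l1sWeight]
        ring

end PoissonKernel

section Extension

variable {n : ℕ} {s pns : ℝ}

theorem MemL1s.lintegral_enorm_mul_l1sWeight {u : Eu n → ℝ} (hu : MemL1s n s u) :
    ∫⁻ z', ‖u z'‖ₑ * ENNReal.ofReal (l1sWeight n s z') =
      ENNReal.ofReal (L1sNorm n s u) := by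
  have hint : Integrable fun z' => |u z'| * l1sWeight n s z' := by
    refine hu.abs.congr (ae_of_all _ fun z' => ?_)
    show |u z' * l1sWeight n s z'| = _
    rw [abs_mul, abs_of_nonneg (l1sWeight_nonneg z')]
  rw [show L1sNorm n s u = ∫ z', |u z'| * l1sWeight n s z' from rfl,
    ofReal_integral_eq_lintegral_ofReal hint
      (ae_of_all _ fun z' => mul_nonneg (abs_nonneg _) (l1sWeight_nonneg z'))]
  refine lintegral_congr fun z' => ?_
  rw [ENNReal.ofReal_mul (abs_nonneg _), Real.enorm_eq_ofReal_abs]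

theorem IsPoissonConst.enorm_integral_mul_Pgen_le (h : IsPoissonConst n s pns) (hs : 0 ≤ s)
    {R : ℝ} (hR : 0 < R) {x' : Eu n} {y : ℝ} (hx' : ‖x'‖ < R) (hy : 0 ≤ y) (hyR : y ≤ R)
    (u : Eu n → ℝ) :
    ‖∫ z', u z' * Pgen n s pns (x' - z') y‖ₑ ≤
      (∫⁻ z' in ball 0 (2 * R), ‖u z'‖ₑ * ENNReal.ofReal (Pgen n s pns (x' - z') y)) +
        ENNReal.ofReal (poissonTailConst n s R) *
          ∫⁻ z', ‖u z'‖ₑ * ENNReal.ofReal (l1sWeight n s z') := by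
  have htail :
      ∫⁻ z' in (ball 0 (2 * R))ᶜ, ‖u z'‖ₑ * ENNReal.ofReal (Pgen n s pns (x' - z') y) ≤
        ENNReal.ofReal (poissonTailConst n s R) *
          ∫⁻ z', ‖u z'‖ₑ * ENNReal.ofReal (l1sWeight n s z') := by
    rw [← lintegral_const_mul' _ _ ENNReal.ofReal_ne_top]
    refine (setLIntegral_mono' measurableSet_ball.compl fun z' hz' => ?_).trans
      (setLIntegral_le_lintegral _ _)
    rw [mem_compl_iff, mem_ball_zero_iff, not_lt] at hz'
    rw [mul_left_comm, ← ENNReal.ofReal_mul' (l1sWeight_nonneg z')]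
    gcongr
    exact h.Pgen_sub_le hs hR hx' hy hyR hz'
  calc ‖∫ z', u z' * Pgen n s pns (x' - z') y‖ₑ
      ≤ ∫⁻ z', ‖u z'‖ₑ * ENNReal.ofReal (Pgen n s pns (x' - z') y) := by
        refine (enorm_integral_le_lintegral_enorm _).trans_eq (lintegral_congr fun z' => ?_)
        rw [enorm_mul, Real.enorm_eq_ofReal (Pgen_nonneg h.1.le _ hy)]
    _ ≤ _ := by
        rw [← lintegral_add_compl _ measurableSet_ball]
        exact add_le_add le_rfl htail

theorem IsPoissonConst.setLIntegral_rpow_add_le (h : IsPoissonConst n s pns) {p : ℝ}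
    (hp : 1 ≤ p) {u : Eu n → ℝ} (hu : Measurable u) {y : ℝ} (hy : 0 < y) (S T : Set (Eu n))
    (K : ℝ≥0∞) :
    ∫⁻ x' in S, ((∫⁻ z' in T, ‖u z'‖ₑ * ENNReal.ofReal (Pgen n s pns (x' - z') y)) + K) ^ p
      ≤
      2 ^ (p - 1) * ((∫⁻ z' in T, ‖u z'‖ₑ ^ p) + K ^ p * volume S) := by
  have hk : Measurable fun xb : Eu n => ENNReal.ofReal (Pgen n s pns xb y) :=
    ENNReal.measurable_ofReal.comp (measurable_Pgen.comp (measurable_id.prodMk measurable_const))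
  set F := fun x' => ∫⁻ z' in T, ‖u z'‖ₑ * ENNReal.ofReal (Pgen n s pns (x' - z') y)
  calc ∫⁻ x' in S, (F x' + K) ^ p
      ≤ ∫⁻ x' in S, 2 ^ (p - 1) * (F x' ^ p + K ^ p) :=
        lintegral_mono fun x' => ENNReal.rpow_add_le_mul_rpow_add_rpow _ _ hp
    _ = 2 ^ (p - 1) * ((∫⁻ x' in S, F x' ^ p) + K ^ p * volume S) := by
        rw [lintegral_const_mul' _ _ (ENNReal.rpow_ne_top_of_nonneg (by linarith) (by simp)),
          lintegral_add_right _ measurable_const, setLIntegral_const]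
    _ ≤ 2 ^ (p - 1) * ((∫⁻ z' in T, ‖u z'‖ₑ ^ p) + K ^ p * volume S) := by
        gcongr 2 ^ (p - 1) * (?_ + _)
        exact (setLIntegral_le_lintegral _ _).trans
          (lintegral_rpow_setLIntegral_mul_sub_le hp hu.enorm hk
            (h.lintegral_ofReal_Pgen hy).le T)

theorem IsPoissonConst.setLIntegral_HB_rpow_sExt_le (h : IsPoissonConst n s pns) (hs : 0 ≤ s)
    {p : ℝ} (hp : 1 ≤ p) {R : ℝ} (hR : 0 < R) {u : Eu n → ℝ} (hu : Measurable u) :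
    ∫⁻ x in HB n R, ENNReal.ofReal (lastE x ^ (1 - 2 * s) * |sExt n s pns u x| ^ p) ≤
      (∫⁻ y in Ioo 0 R, ENNReal.ofReal (y ^ (1 - 2 * s))) *
        (2 ^ (p - 1) * ((∫⁻ z' in ball 0 (2 * R), ‖u z'‖ₑ ^ p) +
          (ENNReal.ofReal (poissonTailConst n s R) *
            ∫⁻ z', ‖u z'‖ₑ * ENNReal.ofReal (l1sWeight n s z')) ^ p *
              volume (ball (0 : Eu n) R))) := by
  set K := ENNReal.ofReal (poissonTailConst n s R) *
    ∫⁻ z', ‖u z'‖ₑ * ENNReal.ofReal (l1sWeight n s z')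
  set F := fun (x' : Eu n) (y : ℝ) =>
    ∫⁻ z' in ball 0 (2 * R), ‖u z'‖ₑ * ENNReal.ofReal (Pgen n s pns (x' - z') y)
  calc ∫⁻ x in HB n R, ENNReal.ofReal (lastE x ^ (1 - 2 * s) * |sExt n s pns u x| ^ p)
      ≤ ∫⁻ x in HB n R,
          ENNReal.ofReal (lastE x ^ (1 - 2 * s)) * (F (headE x) (lastE x) + K) ^ p := by
        refine setLIntegral_mono' (measurableSet_HB R) fun x hx => ?_
        have hmem := HB_subset_preimage_lastHeadEquiv R hx
        rw [mem_preimage, lastHeadEquiv_apply] at hmem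
        obtain ⟨⟨hy, hyR⟩, hx'⟩ := hmem
        rw [mem_ball_zero_iff] at hx'
        rw [ENNReal.ofReal_mul (by positivity), ← ENNReal.ofReal_rpow_of_nonneg (abs_nonneg _)
          (by linarith), ← Real.enorm_eq_ofReal_abs]
        gcongr
        exact h.enorm_integral_mul_Pgen_le hs hR hx' hy.le hyR.le u
    _ ≤ ∫⁻ y in Ioo 0 R, ∫⁻ x' in ball 0 R,
          ENNReal.ofReal (y ^ (1 - 2 * s)) * (F x' y + K) ^ p :=
        setLIntegral_HB_le R fun w => ENNReal.ofReal (w.1 ^ (1 - 2 * s)) * (F w.2 w.1 + K) ^ p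
    _ ≤ ∫⁻ y in Ioo 0 R, ENNReal.ofReal (y ^ (1 - 2 * s)) *
          (2 ^ (p - 1) *
            ((∫⁻ z' in ball 0 (2 * R), ‖u z'‖ₑ ^ p) + K ^ p * volume (ball (0 : Eu n) R))) := by
        refine setLIntegral_mono' measurableSet_Ioo fun y hy => ?_
        rw [lintegral_const_mul' _ _ ENNReal.ofReal_ne_top]
        gcongr
        exact h.setLIntegral_rpow_add_le hp hu hy.1 _ _ K
    _ = _ := lintegral_mul_const _ (by fun_prop)

end Extension

theorem stmt15_general (n : ℕ) (s : ℝ) (hs0 : 0 < s) (hs1 : s < 1)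
    (p : ℝ) (hp : 1 ≤ p) (R : ℝ) (hR : 0 < R) :
    ∃ C : ℝ, 0 < C ∧
      ∀ (u : Eu n → ℝ) (pns : ℝ) (v : Eu (n+1) → ℝ),
        Measurable u →
        IntegrableOn (fun x' : Eu n => |u x'| ^ p) (Metric.ball (0 : Eu n) (2 * R)) →
        MemL1s n s u →
        IsPoissonConst n s pns → v = sExt n s pns u →
        (∫ x in HB n R, (lastE x) ^ (1 - 2 * s) * |v x| ^ p) ^ (1/p)
          ≤ C * ((∫ x' in Metric.ball (0 : Eu n) (2 * R), |u x'| ^ p) ^ (1/p)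
              + L1sNorm n s u) := by
  have hp0 : 0 < p := zero_lt_one.trans_le hp
  set D : ℝ≥0∞ := (∫⁻ y in Ioo 0 R, ENNReal.ofReal (y ^ (1 - 2 * s))) * 2 ^ (p - 1) *
    (1 + ENNReal.ofReal (poissonTailConst n s R) ^ p * volume (ball (0 : Eu n) R)) with hDdef
  have hD : D ≠ ∞ := by
    have := setLIntegral_Ioo_ofReal_rpow_ne_top (r := 1 - 2 * s) (by linarith) R
    have : volume (ball (0 : Eu n) R) ≠ ∞ := measure_ball_lt_top.ne
    finiteness
  refine ⟨D.toReal ^ (1 / p) + 1, by positivity, fun u pns v hu hLp hMem hP hv => ?_⟩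
  subst hv
  have hbound := hP.setLIntegral_HB_rpow_sExt_le hs0.le hp hR hu
  rw [setLIntegral_enorm_rpow_eq_ofReal hp0.le hLp, hMem.lintegral_enorm_mul_l1sWeight] at hbound
  have hA : 0 ≤ ∫ x' in ball (0 : Eu n) (2 * R), |u x'| ^ p := by positivity
  have hB : 0 ≤ L1sNorm n s u := integral_nonneg fun x' => by positivity
  have hS : 0 ≤ (∫ x' in ball (0 : Eu n) (2 * R), |u x'| ^ p) ^ (1 / p) + L1sNorm n s u := by
    positivity
  have hweight : 0 ≤ᵐ[volume.restrict (HB n R)]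
      fun x => lastE x ^ (1 - 2 * s) * |sExt n s pns u x| ^ p :=
    ae_restrict_of_forall_mem (measurableSet_HB R) fun x hx => by
      have : 0 < lastE x := hx.2
      positivity
  refine (integral_rpow_one_div_le_of_lintegral_le hweight hp0 hS hD (hbound.trans ?_)).trans ?_
  · rw [hDdef, mul_assoc, mul_assoc]
    gcongr
    exact ENNReal.ofReal_add_mul_rpow_le hp0 hA hB _ _
  · gcongr
    exact le_add_of_nonneg_right zero_le_one

/-- Weighted `L^p` bound for the `s`-harmonic extension
(Lemma `LpExtension`): `‖v‖_{L^p(𝔅_R⁺, y^a)} ≤ C_R (‖u‖_{L^p(B_{2R})} + ‖u‖_{L¹_s(ℝⁿ)})`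
with `C_R` depending only on `n`, `s`, `p` and `R`. -/
theorem stmt15 (n : ℕ) (hn : 1 ≤ n) (s : ℝ) (hs0 : 0 < s) (hs1 : s < 1)
    (p : ℝ) (hp : 1 ≤ p) (R : ℝ) (hR : 0 < R) :
    ∃ C : ℝ, 0 < C ∧
      ∀ (u : Eu n → ℝ) (pns : ℝ) (v : Eu (n+1) → ℝ),
        Measurable u →
        IntegrableOn (fun x' : Eu n => |u x'| ^ p) (Metric.ball (0 : Eu n) (2 * R)) →
        MemL1s n s u →
        IsPoissonConst n s pns → v = sExt n s pns u →
        (∫ x in HB n R, (lastE x) ^ (1 - 2 * s) * |v x| ^ p) ^ (1/p)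
          ≤ C * ((∫ x' in Metric.ball (0 : Eu n) (2 * R), |u x'| ^ p) ^ (1/p)
              + L1sNorm n s u) :=
  stmt15_general n s hs0 hs1 p hp R hR
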